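/- arXiv:2307.00853 — 4 statements merged into one kernel-verified Lean document; each statement's English description precedes it below -/
import Mathlib

section
/- For any triangle abc and any segment pq that intersects the interior of the triangle abc, at least one of the six segments pa, pb, pc, qa, qb, qc intersects the interior of the triangle abc. -/
/-!
In barycentric coordinates with respect to the vertices, the open triangle is the set of points
with all three coordinates positive. Since each coordinate is affine, a coordinate positive at a
point of the segment `pq` is positive at `p` or at `q`; as there are only three coordinates, one
endpoint `u` has all coordinates positive except possibly the `i`-th one. Moving from `u` towards
the `i`-th vertex keeps the other coordinates positive and drives the `i`-th one up to `1`, so the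
segment from `u` to that vertex enters the interior.
-/

abbrev Plane := EuclideanSpace ℝ (Fin 2)

open Set Module

section

variable {k V P : Type*} [Field k] [AddCommGroup V] [Module k V] [AddTorsor V P]
  [FiniteDimensional k V]

noncomputable def AffineBasis.ofNotCollinear (hV : finrank k V = 2) {a b c : P}
    (h : ¬ Collinear k ({a, b, c} : Set P)) : AffineBasis (Fin 3) k P :=
  ⟨![a, b, c], affineIndependent_iff_not_collinear_set.mpr h, by
    rw [(affineIndependent_iff_not_collinear_set.mpr h)
      |>.affineSpan_eq_top_iff_card_eq_finrank_add_one, hV, Fintype.card_fin]⟩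

theorem AffineBasis.range_ofNotCollinear (hV : finrank k V = 2) {a b c : P}
    (h : ¬ Collinear k ({a, b, c} : Set P)) :
    range (AffineBasis.ofNotCollinear hV h) = {a, b, c} := by
  show range ![a, b, c] = _
  simp_rw [Matrix.range_cons, Matrix.range_empty, singleton_union, insert_empty_eq]

end

theorem Fin.exists_forall_ne_of_forall_or (P Q : Fin 3 → Prop) (h : ∀ i, P i ∨ Q i) :
    (∃ i, ∀ j ≠ i, P j) ∨ (∃ i, ∀ j ≠ i, Q j) := by
  simp only [Fin.exists_fin_succ, Fin.forall_fin_succ] at h ⊢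
  grind

section

variable {ι E : Type*} [AddCommGroup E] [Module ℝ E]

theorem AffineBasis.pos_coord_or_of_mem_segment (B : AffineBasis ι ℝ E) {p q x : E}
    (hx : x ∈ segment ℝ p q) {i : ι} (hi : 0 < B.coord i x) :
    0 < B.coord i p ∨ 0 < B.coord i q := by
  by_contra! h
  have hconv : Convex ℝ (B.coord i ⁻¹' Iic 0) := (convex_Iic 0).affine_preimage _
  exact (hconv.segment_subset h.1 h.2 hx).not_gt hi

theorem AffineBasis.exists_mem_segment_forall_coord_pos (B : AffineBasis ι ℝ E) {u : E}
    {i : ι} (hu : ∀ j ≠ i, 0 < B.coord j u) :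
    ∃ y ∈ segment ℝ u (B i), ∀ j, 0 < B.coord j y := by
  set c := B.coord i u
  set t : ℝ := 1 / (2 + |c|)
  have ht : t ∈ Icc (0 : ℝ) 1 := ⟨by positivity, by
    rw [div_le_one (by positivity)]; linarith [abs_nonneg c]⟩
  refine ⟨AffineMap.lineMap (B i) u t,
    segment_symm ℝ (B i) u ▸ lineMap_mem_segment ℝ _ _ ht, ?_⟩
  intro j
  rw [AffineMap.apply_lineMap, AffineMap.lineMap_apply_ring]
  rcases eq_or_ne j i with rfl | hj
  · rw [B.coord_apply_eq]
    have : t * (1 - c) < 1 := by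
      rw [div_mul_eq_mul_div, one_mul, div_lt_one (by positivity)]
      linarith [neg_abs_le c]
    linarith
  · rw [B.coord_apply_ne hj, mul_zero, zero_add]
    exact mul_pos (by positivity) (hu j hj)

theorem AffineBasis.exists_segment_to_vertex_forall_coord_pos (B : AffineBasis (Fin 3) ℝ E)
    {p q x : E} (hx : x ∈ segment ℝ p q) (hpos : ∀ i, 0 < B.coord i x) :
    ∃ u ∈ ({p, q} : Set E), ∃ i, ∃ y ∈ segment ℝ u (B i), ∀ j, 0 < B.coord j y := by
  obtain ⟨i, hi⟩ | ⟨i, hi⟩ := Fin.exists_forall_ne_of_forall_or _ _ fun j ↦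
    B.pos_coord_or_of_mem_segment hx (hpos j)
  exacts [⟨p, .inl rfl, i, B.exists_mem_segment_forall_coord_pos hi⟩,
    ⟨q, .inr rfl, i, B.exists_mem_segment_forall_coord_pos hi⟩]

end

theorem triangle_hide_general (a b c p q : Plane)
    (htri : ¬ Collinear ℝ ({a, b, c} : Set Plane))
    (hint : (segment ℝ p q ∩ interior (convexHull ℝ ({a, b, c} : Set Plane))).Nonempty) :
    ∃ u v : Plane, (u = p ∨ u = q) ∧ (v = a ∨ v = b ∨ v = c) ∧
      (segment ℝ u v ∩ interior (convexHull ℝ ({a, b, c} : Set Plane))).Nonempty := by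
  set B := AffineBasis.ofNotCollinear finrank_euclideanSpace_fin htri
  have hB : range B = {a, b, c} := AffineBasis.range_ofNotCollinear _ htri
  rw [← hB, B.interior_convexHull] at hint ⊢
  obtain ⟨x, hx, hpos⟩ := hint
  obtain ⟨u, hu, i, y, hy, hypos⟩ := B.exists_segment_to_vertex_forall_coord_pos hx hpos
  have hvertex : B i ∈ ({a, b, c} : Set Plane) := hB ▸ mem_range_self i
  exact ⟨u, B i, hu, hvertex, y, hy, hypos⟩

theorem triangle_hide (a b c p q : Plane)
    (htri : ¬ Collinear ℝ ({a, b, c} : Set Plane)) (hpq : p ≠ q)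
    (hint : (segment ℝ p q ∩ interior (convexHull ℝ ({a, b, c} : Set Plane))).Nonempty) :
    ∃ u v : Plane, (u = p ∨ u = q) ∧ (v = a ∨ v = b ∨ v = c) ∧
      (segment ℝ u v ∩ interior (convexHull ℝ ({a, b, c} : Set Plane))).Nonempty :=
  triangle_hide_general a b c p q htri hint
end

section
/- Let p₁, p₂, p₃, p₄ be four points in the plane such that segments p₁p₂ and p₃p₄ cross, and let ℓ be any line. Then the number of segments among {p₁p₃, p₂p₄} crossed by ℓ is at most the number of segments among {p₁p₂, p₃p₄} crossed by ℓ, or the number of segments among {p₁p₄, p₂p₃} crossed by ℓ is at most the number of segments among {p₁p₂, p₃p₄} crossed by ℓ; in fact: for any flip, the total number of crossings of ℓ with the two inserted segments (either pair) never exceeds the number of crossings of ℓ with the two removed crossing segments. -/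
/-- Two segments cross: they intersect in exactly one point, which is interior to both. -/
def SegCross (a b c d : Plane) : Prop :=
  ∃ x, segment ℝ a b ∩ segment ℝ c d = {x} ∧
    x ∈ openSegment ℝ a b ∧ x ∈ openSegment ℝ c d

/-- A set is a line if it is the affine span of two distinct points. -/
def IsLine (l : Set Plane) : Prop :=
  ∃ a b : Plane, a ≠ b ∧ l = (affineSpan ℝ ({a, b} : Set Plane) : Set Plane)

/-- A line crosses a segment: they meet at exactly one point, which is not an
endpoint of the segment. -/
def LineCross (l : Set Plane) (c d : Plane) : Prop :=
  ∃ x, l ∩ segment ℝ c d = {x} ∧ x ∈ openSegment ℝ c d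

open scoped Classical in
/-- Number of segments among the two given segments crossed by `l`. -/
noncomputable def pairCrossCount (l : Set Plane) (a b c d : Plane) : ℕ :=
  (if LineCross l a b then 1 else 0) + (if LineCross l c d then 1 else 0)

/-!
Write the line as the zero set of an affine functional `f`. A segment `pq` is crossed whenever
`f p * f q < 0`, and only then if `p ≠ q`. Unless all four points coincide, the two crossing
segments share no endpoint, so the inserted segments are nondegenerate and everything reduces to
the values `A, B, C, D` of `f` at `p₁, …, p₄`, with `t = f x ∈ (A, B) ∩ (C, D)` for the crossing
point `x`.

If `t ≠ 0`, the values `A, B` change sign iff exactly one of them lies strictly on the side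
opposite to `t` (both cannot, `t` being a convex combination of them), and the same holds for
`C, D`; a sign change between `A` and `C`, or between `B` and `D`, needs one of its two values
on that opposite side. If `t = 0`, each of the pairs `A, B` and `C, D` either changes sign or
vanishes, and a vanishing pair kills both sign changes between the pairs.
-/

theorem ite_le_ite_of_imp {p q : Prop} [Decidable p] [Decidable q] (h : p → q) :
    (if p then 1 else 0 : ℕ) ≤ if q then 1 else 0 := by
  split_ifs <;> simp_all

theorem AffineMap.injOn_segment {E F : Type*} [AddCommGroup E] [Module ℝ E] [AddCommGroup F]
    [Module ℝ F] (f : E →ᵃ[ℝ] F) {c d : E} (h : f c ≠ f d) : Set.InjOn f (segment ℝ c d) := by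
  rw [segment_eq_image_lineMap]
  rintro _ ⟨r, -, rfl⟩ _ ⟨s, -, rfl⟩ hrs
  rw [f.apply_lineMap, f.apply_lineMap] at hrs
  rw [AffineMap.lineMap_injective ℝ h hrs]

section SignChange

noncomputable def signChange (x y : ℝ) : ℕ := if x * y < 0 then 1 else 0

theorem signChange_comm (x y : ℝ) : signChange x y = signChange y x := by
  rw [signChange, signChange, mul_comm]

variable {t a b c d : ℝ}

theorem mul_neg_or_eq_zero_of_zero_mem_openSegment (h : (0 : ℝ) ∈ openSegment ℝ a b) :
    a * b < 0 ∨ (a = 0 ∧ b = 0) := by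
  obtain ⟨α, β, hα, hβ, -, h⟩ := h
  simp only [smul_eq_mul] at h
  by_cases ha : a = 0
  · subst ha
    exact Or.inr ⟨rfl, by simpa [hβ.ne'] using h⟩
  · have hsum : α * (a * a) + β * (a * b) = 0 := by linear_combination a * h
    left
    nlinarith [mul_pos hα (mul_self_pos.2 ha)]

theorem mul_pos_of_mem_openSegment (h : t ∈ openSegment ℝ a b) (ht : t ≠ 0) (ha : t * a ≤ 0) :
    0 < t * b := by
  obtain ⟨α, β, hα, hβ, -, rfl⟩ := h
  simp only [smul_eq_mul] at ht ⊢ ha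
  nlinarith [mul_self_pos.2 ht]

theorem signChange_le_add (ht : t ≠ 0) (x y : ℝ) :
    signChange x y ≤ signChange t x + signChange t y := by
  by_cases hxy : x * y < 0
  · have : t * x * (t * y) < 0 := by nlinarith [mul_self_pos.2 ht]
    rcases mul_neg_iff.1 this with ⟨-, h⟩ | ⟨h, -⟩ <;> simp [signChange, hxy, h]
  · simp [signChange, hxy]

theorem signChange_eq_add_of_mem_openSegment (ht : t ≠ 0) (h : t ∈ openSegment ℝ a b) :
    signChange a b = signChange t a + signChange t b := by
  have hsq := mul_self_pos.2 ht
  by_cases ha : t * a < 0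
  · have hb := mul_pos_of_mem_openSegment h ht ha.le
    have : a * b < 0 := by nlinarith
    simp [signChange, ha, hb.not_gt, this]
  by_cases hb : t * b < 0
  · have ha' := mul_pos_of_mem_openSegment (openSegment_symm ℝ a b ▸ h) ht hb.le
    have : a * b < 0 := by nlinarith
    simp [signChange, ha, hb, this]
  · have : ¬ a * b < 0 := by nlinarith
    simp [signChange, ha, hb, this]

theorem signChange_add_signChange_le (hab : t ∈ openSegment ℝ a b) (hcd : t ∈ openSegment ℝ c d) :
    signChange a c + signChange b d ≤ signChange a b + signChange c d := by
  rcases eq_or_ne t 0 with rfl | ht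
  · rcases mul_neg_or_eq_zero_of_zero_mem_openSegment hab with hab | ⟨rfl, rfl⟩
    · rcases mul_neg_or_eq_zero_of_zero_mem_openSegment hcd with hcd | ⟨rfl, rfl⟩
      · simp only [signChange, hab, hcd, if_true]
        split_ifs <;> omega
      · simp [signChange]
    · simp [signChange]
  · rw [signChange_eq_add_of_mem_openSegment ht hab, signChange_eq_add_of_mem_openSegment ht hcd]
    have := signChange_le_add ht a c
    have := signChange_le_add ht b d
    omega

end SignChange

section LineCross

variable (f : Plane →ᵃ[ℝ] ℝ) {a b c d : Plane}

theorem lineCross_preimage_zero_of_mul_neg (h : f c * f d < 0) : LineCross (f ⁻¹' {0}) c d := by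
  have hne : f c ≠ f d := fun he => (mul_self_nonneg (f d)).not_gt (he ▸ h)
  have h0 : (0 : ℝ) ∈ openSegment ℝ (f c) (f d) := by
    rw [openSegment_eq_Ioo' hne]
    rcases mul_neg_iff.1 h with ⟨hc, hd⟩ | ⟨hc, hd⟩
    · exact ⟨min_lt_of_right_lt hd, lt_max_of_lt_left hc⟩
    · exact ⟨min_lt_of_left_lt hc, lt_max_of_lt_right hd⟩
  obtain ⟨x, hx, hfx⟩ := (image_openSegment ℝ f c d).symm ▸ h0
  refine ⟨x, Set.eq_singleton_iff_unique_mem.2 ⟨⟨hfx, openSegment_subset_segment ℝ c d hx⟩, ?_⟩, hx⟩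
  rintro y ⟨hfy, hy⟩
  exact f.injOn_segment hne hy (openSegment_subset_segment ℝ c d hx) (hfy.trans hfx.symm)

theorem mul_neg_of_lineCross_preimage_zero (hcd : c ≠ d) (h : LineCross (f ⁻¹' {0}) c d) :
    f c * f d < 0 := by
  obtain ⟨x, hl, hx⟩ := h
  have hfx : f x = 0 := (hl.symm ▸ Set.mem_singleton x : x ∈ f ⁻¹' {0} ∩ segment ℝ c d).1
  have h0 : (0 : ℝ) ∈ openSegment ℝ (f c) (f d) := image_openSegment ℝ f c d ▸ ⟨x, hx, hfx⟩
  refine (mul_neg_or_eq_zero_of_zero_mem_openSegment h0).resolve_right fun ⟨hc, hd⟩ => hcd ?_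
  have hc' : c ∈ f ⁻¹' {0} ∩ segment ℝ c d := ⟨hc, left_mem_segment ℝ c d⟩
  have hd' : d ∈ f ⁻¹' {0} ∩ segment ℝ c d := ⟨hd, right_mem_segment ℝ c d⟩
  rw [hl] at hc' hd'
  exact hc'.trans hd'.symm

theorem lineCross_preimage_zero_iff (hcd : c ≠ d) :
    LineCross (f ⁻¹' {0}) c d ↔ f c * f d < 0 :=
  ⟨mul_neg_of_lineCross_preimage_zero f hcd, lineCross_preimage_zero_of_mul_neg f⟩

theorem pairCrossCount_preimage_zero (hab : a ≠ b) (hcd : c ≠ d) :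
    pairCrossCount (f ⁻¹' {0}) a b c d = signChange (f a) (f b) + signChange (f c) (f d) := by
  simp only [pairCrossCount, signChange, lineCross_preimage_zero_iff f hab,
    lineCross_preimage_zero_iff f hcd]

open scoped Classical in
theorem signChange_add_signChange_le_pairCrossCount (a b c d : Plane) :
    signChange (f a) (f b) + signChange (f c) (f d) ≤ pairCrossCount (f ⁻¹' {0}) a b c d :=
  add_le_add (ite_le_ite_of_imp (lineCross_preimage_zero_of_mul_neg f))
    (ite_le_ite_of_imp (lineCross_preimage_zero_of_mul_neg f))

end LineCross

theorem exists_lineMap_eq_of_det_eq_zero {a b x : Plane} (hab : a ≠ b)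
    (h : (b 0 - a 0) * (x 1 - a 1) - (b 1 - a 1) * (x 0 - a 0) = 0) :
    ∃ r : ℝ, AffineMap.lineMap a b r = x := by
  have hD : (b 0 - a 0) ^ 2 + (b 1 - a 1) ^ 2 ≠ 0 := fun h0 =>
    hab (PiLp.ext (Fin.forall_fin_two.2 ⟨by nlinarith [sq_nonneg (b 1 - a 1)],
      by nlinarith [sq_nonneg (b 0 - a 0)]⟩))
  -- the parameter of the orthogonal projection of `x` onto the line
  refine ⟨((x 0 - a 0) * (b 0 - a 0) + (x 1 - a 1) * (b 1 - a 1)) /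
    ((b 0 - a 0) ^ 2 + (b 1 - a 1) ^ 2), PiLp.ext (Fin.forall_fin_two.2 ⟨?_, ?_⟩)⟩ <;>
    simp only [AffineMap.lineMap_apply_module', PiLp.add_apply, PiLp.smul_apply, PiLp.sub_apply,
      smul_eq_mul] <;>
    field_simp
  · linear_combination (b 1 - a 1) * h
  · linear_combination (a 0 - b 0) * h

theorem IsLine.exists_eq_preimage_zero {l : Set Plane} (hl : IsLine l) :
    ∃ f : Plane →ᵃ[ℝ] ℝ, l = f ⁻¹' {0} := by
  obtain ⟨a, b, hab, rfl⟩ := hl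
  let f : Plane →ᵃ[ℝ] ℝ :=
    { toFun x := (b 0 - a 0) * (x 1 - a 1) - (b 1 - a 1) * (x 0 - a 0)
      linear := (b 0 - a 0) • (EuclideanSpace.proj 1 : Plane →L[ℝ] ℝ).toLinearMap -
        (b 1 - a 1) • (EuclideanSpace.proj 0 : Plane →L[ℝ] ℝ).toLinearMap
      map_vadd' x v := by
        simp only [vadd_eq_add, PiLp.add_apply, LinearMap.sub_apply, LinearMap.smul_apply,
          ContinuousLinearMap.coe_coe, PiLp.proj_apply, smul_eq_mul]
        ring }
  refine ⟨f, Set.ext fun x => ?_⟩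
  rw [SetLike.mem_coe, mem_affineSpan_pair_iff_exists_lineMap_eq]
  constructor
  · rintro ⟨r, rfl⟩
    simp only [f, AffineMap.coe_mk, AffineMap.lineMap_apply_module', Set.mem_preimage,
      PiLp.add_apply, PiLp.smul_apply, PiLp.sub_apply, smul_eq_mul, Set.mem_singleton_iff]
    ring
  · intro hx
    exact exists_lineMap_eq_of_det_eq_zero hab hx

namespace SegCross

variable {a b c d : Plane}

theorem swap_left (h : SegCross a b c d) : SegCross b a c d := by
  simpa only [SegCross, segment_symm ℝ a b, openSegment_symm ℝ a b] using h

theorem swap_right (h : SegCross a b c d) : SegCross a b d c := by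
  simpa only [SegCross, segment_symm ℝ c d, openSegment_symm ℝ c d] using h

theorem eq_of_left_eq_left (h : SegCross a b c d) (hac : a = c) : a = b ∧ c = d := by
  obtain ⟨x, hx, hab, hcd⟩ := h
  subst hac
  have hax : a = x := (hx ▸ ⟨left_mem_segment ℝ a b, left_mem_segment ℝ a d⟩ : a ∈ ({x} : Set Plane))
  subst hax
  exact ⟨left_mem_openSegment_iff.1 hab, left_mem_openSegment_iff.1 hcd⟩

theorem endpoints_eq_or_ne (h : SegCross a b c d) :
    (a = b ∧ a = c ∧ a = d) ∨ (a ≠ c ∧ a ≠ d ∧ b ≠ c ∧ b ≠ d) := by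
  by_cases hac : a = c
  · obtain ⟨hab, hcd⟩ := h.eq_of_left_eq_left hac
    exact Or.inl ⟨hab, hac, hac.trans hcd⟩
  by_cases had : a = d
  · obtain ⟨hab, hdc⟩ := h.swap_right.eq_of_left_eq_left had
    exact Or.inl ⟨hab, had.trans hdc, had⟩
  by_cases hbc : b = c
  · obtain ⟨hba, hcd⟩ := h.swap_left.eq_of_left_eq_left hbc
    exact Or.inl ⟨hba.symm, hba.symm.trans hbc, hba.symm.trans (hbc.trans hcd)⟩
  by_cases hbd : b = d
  · obtain ⟨hba, hdc⟩ := h.swap_left.swap_right.eq_of_left_eq_left hbd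
    exact Or.inl ⟨hba.symm, hba.symm.trans (hbd.trans hdc), hba.symm.trans hbd⟩
  exact Or.inr ⟨hac, had, hbc, hbd⟩

end SegCross

theorem line_potential_never_increases (p₁ p₂ p₃ p₄ : Plane) (l : Set Plane)
    (hl : IsLine l) (hcross : SegCross p₁ p₂ p₃ p₄) :
    pairCrossCount l p₁ p₃ p₂ p₄ ≤ pairCrossCount l p₁ p₂ p₃ p₄ ∧
    pairCrossCount l p₁ p₄ p₂ p₃ ≤ pairCrossCount l p₁ p₂ p₃ p₄ := by
  rcases hcross.endpoints_eq_or_ne with ⟨rfl, rfl, rfl⟩ | ⟨h₁₃, h₁₄, h₂₃, h₂₄⟩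
  · exact ⟨le_rfl, le_rfl⟩
  obtain ⟨f, rfl⟩ := hl.exists_eq_preimage_zero
  obtain ⟨x, -, hx₁₂, hx₃₄⟩ := hcross
  have h₁₂ : f x ∈ openSegment ℝ (f p₁) (f p₂) := image_openSegment ℝ f p₁ p₂ ▸ ⟨x, hx₁₂, rfl⟩
  have h₃₄ : f x ∈ openSegment ℝ (f p₃) (f p₄) := image_openSegment ℝ f p₃ p₄ ▸ ⟨x, hx₃₄, rfl⟩
  have hold := signChange_add_signChange_le_pairCrossCount f p₁ p₂ p₃ p₄
  rw [pairCrossCount_preimage_zero f h₁₃ h₂₄, pairCrossCount_preimage_zero f h₁₄ h₂₃]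
  refine ⟨(signChange_add_signChange_le h₁₂ h₃₄).trans hold, ?_⟩
  have h₄₃ := openSegment_symm ℝ (f p₃) (f p₄) ▸ h₃₄
  exact (signChange_add_signChange_le h₁₂ h₄₃).trans (signChange_comm (f p₄) (f p₃) ▸ hold)
end

section
/- Let S be a multiset of segments partitioned as S = ⋃ᵢ Sᵢ, with Pᵢ the set of endpoints of Sᵢ. If for all i ≠ j no segment with both endpoints in Pᵢ crosses any segment with both endpoints in Pⱼ, then any flip performed within Sᵢ (removing two crossing segments of Sᵢ and inserting two segments with endpoints in Pᵢ) preserves this property and does not create any crossing between a segment of Sᵢ and a segment of Sⱼ for j ≠ i. -/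
open scoped Classical

/-- The set of endpoints of a multiset of segments (segments given as pairs of points). -/
def endpoints (S : Multiset (Plane × Plane)) : Set Plane :=
  {x | ∃ s ∈ S, x = s.1 ∨ x = s.2}

/-!
A flip only rearranges the four endpoints of the removed crossing pair, so every part keeps its
endpoints or loses some. Being separated is a condition on the endpoint sets alone, and it is
inherited by smaller endpoint sets.
-/

theorem endpoints_subset_iff {S : Multiset (Plane × Plane)} {E : Set Plane} :
    endpoints S ⊆ E ↔ ∀ s ∈ S, s.1 ∈ E ∧ s.2 ∈ E := by
  constructor
  · exact fun h s hs => ⟨h ⟨s, hs, .inl rfl⟩, h ⟨s, hs, .inr rfl⟩⟩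
  · rintro h x ⟨s, hs, rfl | rfl⟩
    exacts [(h s hs).1, (h s hs).2]

theorem fst_mem_endpoints {S : Multiset (Plane × Plane)} {s : Plane × Plane} (hs : s ∈ S) :
    s.1 ∈ endpoints S :=
  ⟨s, hs, .inl rfl⟩

theorem snd_mem_endpoints {S : Multiset (Plane × Plane)} {s : Plane × Plane} (hs : s ∈ S) :
    s.2 ∈ endpoints S :=
  ⟨s, hs, .inr rfl⟩

theorem endpoints_mono {S T : Multiset (Plane × Plane)} (h : S ≤ T) :
    endpoints S ⊆ endpoints T :=
  endpoints_subset_iff.2 fun _ hs =>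
    ⟨fst_mem_endpoints (Multiset.mem_of_le h hs), snd_mem_endpoints (Multiset.mem_of_le h hs)⟩

theorem endpoints_add (S T : Multiset (Plane × Plane)) :
    endpoints (S + T) = endpoints S ∪ endpoints T := by
  ext x
  simp only [endpoints, Multiset.mem_add, Set.mem_union, Set.mem_ofPred_eq, or_and_right,
    exists_or]

theorem endpoints_pair_subset {E : Set Plane} {p q : Plane × Plane}
    (hp₁ : p.1 ∈ E) (hp₂ : p.2 ∈ E) (hq₁ : q.1 ∈ E) (hq₂ : q.2 ∈ E) :
    endpoints {p, q} ⊆ E :=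
  endpoints_subset_iff.2 fun s hs => by
    rcases Multiset.mem_cons.1 hs with rfl | hs
    · exact ⟨hp₁, hp₂⟩
    · rw [Multiset.mem_singleton.1 hs]
      exact ⟨hq₁, hq₂⟩

theorem endpoints_erase_erase_add_subset {S : Multiset (Plane × Plane)} {p q : Plane × Plane}
    {T : Multiset (Plane × Plane)} (hT : endpoints T ⊆ endpoints S) :
    endpoints ((S.erase p).erase q + T) ⊆ endpoints S := by
  rw [endpoints_add]
  exact Set.union_subset
    (endpoints_mono ((Multiset.erase_le q _).trans (Multiset.erase_le p S))) hT

def SeparatedParts {ι : Type*} (S : ι → Multiset (Plane × Plane)) : Prop :=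
  ∀ i j : ι, i ≠ j → ∀ a b c d : Plane,
    a ∈ endpoints (S i) → b ∈ endpoints (S i) →
    c ∈ endpoints (S j) → d ∈ endpoints (S j) → ¬ SegCross a b c d

theorem SeparatedParts.of_endpoints_subset {ι : Type*} {S S' : ι → Multiset (Plane × Plane)}
    (hS : SeparatedParts S) (h : ∀ k, endpoints (S' k) ⊆ endpoints (S k)) :
    SeparatedParts S' :=
  fun j k hjk _ _ _ _ ha hb hc hd => hS j k hjk _ _ _ _ (h j ha) (h j hb) (h k hc) (h k hd)

theorem splitting_lemma_general {ι : Type*} [DecidableEq ι] (S : ι → Multiset (Plane × Plane))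
    (hsep : ∀ i j : ι, i ≠ j → ∀ a b c d : Plane,
      a ∈ endpoints (S i) → b ∈ endpoints (S i) →
      c ∈ endpoints (S j) → d ∈ endpoints (S j) → ¬ SegCross a b c d)
    (i : ι) (a b c d : Plane)
    (hab : (a, b) ∈ S i) (hcd : (c, d) ∈ S i)
    (S' : ι → Multiset (Plane × Plane))
    (hS' : (S' = fun k => if k = i then
        ((S i).erase (a, b)).erase (c, d) + {(a, c), (b, d)} else S k) ∨
      (S' = fun k => if k = i then
        ((S i).erase (a, b)).erase (c, d) + {(a, d), (b, c)} else S k)) :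
    ∀ j k : ι, j ≠ k → ∀ a' b' c' d' : Plane,
      a' ∈ endpoints (S' j) → b' ∈ endpoints (S' j) →
      c' ∈ endpoints (S' k) → d' ∈ endpoints (S' k) → ¬ SegCross a' b' c' d' := by
  have ha : a ∈ endpoints (S i) := fst_mem_endpoints hab
  have hb : b ∈ endpoints (S i) := snd_mem_endpoints hab
  have hc : c ∈ endpoints (S i) := fst_mem_endpoints hcd
  have hd : d ∈ endpoints (S i) := snd_mem_endpoints hcd
  refine SeparatedParts.of_endpoints_subset hsep fun k => ?_
  rcases hS' with rfl | rfl <;> dsimp only <;> split_ifs with hk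
  · subst hk
    exact endpoints_erase_erase_add_subset (endpoints_pair_subset ha hc hb hd)
  · exact subset_rfl
  · subst hk
    exact endpoints_erase_erase_add_subset (endpoints_pair_subset ha hd hb hc)
  · exact subset_rfl

/-- Splitting lemma: if no segment spanned by the endpoints of one part crosses a
segment spanned by the endpoints of another part, then a flip performed inside one
part preserves this property, and in particular creates no crossing between parts. -/
theorem splitting_lemma {ι : Type*} [DecidableEq ι] (S : ι → Multiset (Plane × Plane))
    (hsep : ∀ i j : ι, i ≠ j → ∀ a b c d : Plane,
      a ∈ endpoints (S i) → b ∈ endpoints (S i) →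
      c ∈ endpoints (S j) → d ∈ endpoints (S j) → ¬ SegCross a b c d)
    (i : ι) (a b c d : Plane)
    (hab : (a, b) ∈ S i) (hcd : (c, d) ∈ S i) (hcross : SegCross a b c d)
    (S' : ι → Multiset (Plane × Plane))
    (hS' : (S' = fun k => if k = i then
        ((S i).erase (a, b)).erase (c, d) + {(a, c), (b, d)} else S k) ∨
      (S' = fun k => if k = i then
        ((S i).erase (a, b)).erase (c, d) + {(a, d), (b, c)} else S k)) :
    ∀ j k : ι, j ≠ k → ∀ a' b' c' d' : Plane,
      a' ∈ endpoints (S' j) → b' ∈ endpoints (S' j) →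
      c' ∈ endpoints (S' k) → d' ∈ endpoints (S' k) → ¬ SegCross a' b' c' d' :=
  splitting_lemma_general S hsep i a b c d hab hcd S' hS'
end

section
/- In any arrangement of m ≥ 5 lines in the plane, at most one face of the arrangement has m edges (i.e., at most one face is bounded by portions of all m lines). -/
/-- A face of an arrangement of lines: a connected component of the complement of
the union of the lines. -/
def IsFace (L : Finset (Set Plane)) (F : Set Plane) : Prop :=
  ∃ x ∈ (⋃ l ∈ L, l)ᶜ, F = connectedComponentIn (⋃ l ∈ L, l)ᶜ x

/-- A line `l` contributes an edge to the face `F` if a nondegenerate subsegment of `l`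
lies on the boundary of `F`. -/
def ContributesEdge (l F : Set Plane) : Prop :=
  ∃ x y : Plane, x ≠ y ∧ segment ℝ x y ⊆ l ∩ frontier F

namespace AMOF

/-- affine functional on the plane -/
def aff (A B C : ℝ) (p : Plane) : ℝ := A * p 0 + B * p 1 + C

lemma aff_cont (A B C : ℝ) : Continuous (aff A B C) := by
  unfold aff; fun_prop

lemma aff_param (A B C t : ℝ) (a v : Plane) :
    aff A B C (a + t • v) = aff A B C a + t * (A * v 0 + B * v 1) := by
  simp [aff, PiLp.add_apply, PiLp.smul_apply, smul_eq_mul]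
  ring

lemma aff_combo2 {s t : ℝ} (A B C : ℝ) (p q : Plane) (h : s + t = 1) :
    aff A B C (s • p + t • q) = s * aff A B C p + t * aff A B C q := by
  simp [aff, PiLp.add_apply, PiLp.smul_apply, smul_eq_mul]
  linear_combination (-C) * h

lemma coord_ne {v : Plane} (h : v ≠ 0) : v 0 ≠ 0 ∨ v 1 ≠ 0 := by
  by_contra hc
  push_neg at hc
  apply h
  ext i
  fin_cases i <;> simp [hc.1, hc.2]

lemma mem_line_iff {a b p : Plane} :
    p ∈ (affineSpan ℝ ({a, b} : Set Plane) : Set Plane) ↔ ∃ t : ℝ, p = a + t • (b - a) := by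
  constructor
  · intro hp
    have : (p - a) +ᵥ a ∈ line[ℝ, a, b] := by simpa using hp
    rw [vadd_left_mem_affineSpan_pair] at this
    obtain ⟨r, hr⟩ := this
    exact ⟨r, by simp [vsub_eq_sub] at hr; rw [hr]; abel⟩
  · rintro ⟨t, rfl⟩
    have : t • (b -ᵥ a) +ᵥ a ∈ line[ℝ, a, b] := by
      rw [vadd_left_mem_affineSpan_pair]; exact ⟨t, rfl⟩
    simpa [vsub_eq_sub, vadd_eq_add, add_comm] using this

lemma mem_span_combo {a b x y p : Plane} (hab : a ≠ b)
    (hx : x ∈ (affineSpan ℝ ({a, b} : Set Plane) : Set Plane))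
    (hy : y ∈ (affineSpan ℝ ({a, b} : Set Plane) : Set Plane))
    (hxy : x ≠ y)
    (hp : p ∈ (affineSpan ℝ ({a, b} : Set Plane) : Set Plane)) :
    ∃ r : ℝ, p = x + r • (y - x) := by
  obtain ⟨s, hxs⟩ := mem_line_iff.mp hx
  obtain ⟨t, hys⟩ := mem_line_iff.mp hy
  obtain ⟨u, hps⟩ := mem_line_iff.mp hp
  have hst : s ≠ t := fun h => hxy (by rw [hxs, hys, h])
  refine ⟨(u - s) / (t - s), ?_⟩
  have h1 : y - x = (t - s) • (b - a) := by rw [hxs, hys, sub_smul]; abel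
  rw [hps, h1, hxs, smul_smul, div_mul_cancel₀ _ (sub_ne_zero_of_ne hst.symm),
    add_assoc, ← add_smul, show s + (u - s) = u by ring]

lemma dir_eq {A B C : ℝ} {a b : Plane} (ha0 : aff A B C a = 0) (hb0 : aff A B C b = 0) :
    A * (b - a) 0 + B * (b - a) 1 = 0 := by
  have hb' : a + (1:ℝ) • (b - a) = b := by rw [one_smul]; abel
  have := aff_param A B C 1 a (b - a)
  rw [hb', hb0, ha0] at this
  linarith

lemma eval_const {A B C A' B' C' : ℝ} {a b : Plane}
    (ha0 : aff A B C a = 0) (hb0 : aff A B C b = 0)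
    (hAB : A ≠ 0 ∨ B ≠ 0) (hdet : A * B' - A' * B = 0)
    {x y : Plane}
    (hx : x ∈ (affineSpan ℝ ({a, b} : Set Plane) : Set Plane))
    (hy : y ∈ (affineSpan ℝ ({a, b} : Set Plane) : Set Plane)) :
    aff A' B' C' x = aff A' B' C' y := by
  obtain ⟨s, hxs⟩ := mem_line_iff.mp hx
  obtain ⟨t, hys⟩ := mem_line_iff.mp hy
  have hdir := dir_eq ha0 hb0
  set d0 := (b - a) 0
  set d1 := (b - a) 1
  have hdir' : A' * d0 + B' * d1 = 0 := by
    rcases hAB with hA | hB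
    · have h : A * (A' * d0 + B' * d1) = 0 := by linear_combination A' * hdir + d1 * hdet
      rcases mul_eq_zero.mp h with h | h
      · exact absurd h hA
      · exact h
    · have h : B * (A' * d0 + B' * d1) = 0 := by linear_combination B' * hdir - d0 * hdet
      rcases mul_eq_zero.mp h with h | h
      · exact absurd h hB
      · exact h
  rw [hxs, hys, aff_param, aff_param, hdir']
  ring

lemma eval_inj {A B C A' B' C' : ℝ} {a b : Plane} (hab : a ≠ b)
    (ha0 : aff A B C a = 0) (hb0 : aff A B C b = 0)
    (hdet : A * B' - A' * B ≠ 0)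
    {x y : Plane}
    (hx : x ∈ (affineSpan ℝ ({a, b} : Set Plane) : Set Plane))
    (hy : y ∈ (affineSpan ℝ ({a, b} : Set Plane) : Set Plane))
    (hxy : x ≠ y) :
    aff A' B' C' x ≠ aff A' B' C' y := by
  intro heq
  obtain ⟨s, hxs⟩ := mem_line_iff.mp hx
  obtain ⟨t, hys⟩ := mem_line_iff.mp hy
  have hst : s ≠ t := fun h => hxy (by rw [hxs, hys, h])
  have hdir := dir_eq ha0 hb0
  set d0 := (b - a) 0 with hd0
  set d1 := (b - a) 1 with hd1
  have heq' : aff A' B' C' x = aff A' B' C' a + s * (A' * d0 + B' * d1) := by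
    rw [hxs, aff_param]
  have heq'' : aff A' B' C' y = aff A' B' C' a + t * (A' * d0 + B' * d1) := by
    rw [hys, aff_param]
  have hdir' : A' * d0 + B' * d1 = 0 := by
    have h : (s - t) * (A' * d0 + B' * d1) = 0 := by
      rw [heq', heq''] at heq; linarith
    rcases mul_eq_zero.mp h with h | h
    · exact absurd (by linarith : s = t) hst
    · exact h
  have hd : (b - a) ≠ 0 := sub_ne_zero_of_ne hab.symm
  rcases coord_ne hd with h | h
  · exact h (by
      have : (A * B' - A' * B) * d0 = 0 := by linear_combination B' * hdir - B * hdir'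
      rcases mul_eq_zero.mp this with hh | hh
      · exact absurd hh hdet
      · exact hh)
  · exact h (by
      have : (A * B' - A' * B) * d1 = 0 := by linear_combination (-A') * hdir + A * hdir'
      rcases mul_eq_zero.mp this with hh | hh
      · exact absurd hh hdet
      · exact hh)


/-- Every line admits an affine-functional representation. -/
lemma line_repr {l : Set Plane} (h : IsLine l) :
    ∃ (A B C : ℝ) (a b : Plane), a ≠ b ∧
      l = (affineSpan ℝ ({a, b} : Set Plane) : Set Plane) ∧
      (A ≠ 0 ∨ B ≠ 0) ∧ l = {p | aff A B C p = 0} := by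
  obtain ⟨a, b, hab, rfl⟩ := h
  have hdne : b - a ≠ 0 := sub_ne_zero_of_ne hab.symm
  refine ⟨(b-a) 1, -((b-a) 0), -((b-a) 1 * a 0 - (b-a) 0 * a 1), a, b, hab, rfl, ?_, ?_⟩
  · rcases coord_ne hdne with h0 | h1
    · exact Or.inr (neg_ne_zero.mpr h0)
    · exact Or.inl h1
  · ext p
    simp only [Set.mem_setOf_eq]
    rw [mem_line_iff]
    constructor
    · rintro ⟨t, rfl⟩
      rw [aff_param]
      simp only [aff, PiLp.sub_apply]
      ring
    · intro h0
      simp only [aff, PiLp.sub_apply] at h0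
      rcases coord_ne hdne with hc | hc
      · rw [PiLp.sub_apply] at hc
        refine ⟨(p 0 - a 0) / (b 0 - a 0), ?_⟩
        ext i
        fin_cases i
        · simp only [PiLp.add_apply, PiLp.smul_apply, PiLp.sub_apply, smul_eq_mul]
          show p 0 = a 0 + (p 0 - a 0) / (b 0 - a 0) * (b 0 - a 0)
          rw [div_mul_cancel₀ _ hc]; ring
        · simp only [PiLp.add_apply, PiLp.smul_apply, PiLp.sub_apply, smul_eq_mul]
          show p 1 = a 1 + (p 0 - a 0) / (b 0 - a 0) * (b 1 - a 1)
          field_simp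
          linear_combination -h0
      · rw [PiLp.sub_apply] at hc
        refine ⟨(p 1 - a 1) / (b 1 - a 1), ?_⟩
        ext i
        fin_cases i
        · simp only [PiLp.add_apply, PiLp.smul_apply, PiLp.sub_apply, smul_eq_mul]
          show p 0 = a 0 + (p 1 - a 1) / (b 1 - a 1) * (b 0 - a 0)
          field_simp
          linear_combination h0
        · simp only [PiLp.add_apply, PiLp.smul_apply, PiLp.sub_apply, smul_eq_mul]
          show p 1 = a 1 + (p 1 - a 1) / (b 1 - a 1) * (b 1 - a 1)
          rw [div_mul_cancel₀ _ hc]; ring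

lemma sq_pos' {a : ℝ} (h : a ≠ 0) : 0 < a ^ 2 :=
  (sq_nonneg a).lt_of_ne' (pow_ne_zero 2 h)

lemma transfer_nonneg {c d v : ℝ} (h : 0 ≤ c * v) (hcd : 0 < c * d) : 0 ≤ d * v := by
  have hc : c ≠ 0 := by rintro rfl; simp at hcd
  nlinarith [sq_pos' hc, mul_nonneg h hcd.le]

lemma transfer_nonpos {c d v : ℝ} (h : 0 ≤ c * v) (hcd : c * d < 0) : d * v ≤ 0 := by
  have hc : c ≠ 0 := by rintro rfl; simp at hcd
  nlinarith [sq_pos' hc, mul_nonneg h (neg_nonneg.mpr hcd.le)]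

/-- The core real lemma: an affine function of one variable that is ≤0 at two distinct
nonnegative points, ≥0 at two distinct nonnegative points, ≤0 at two distinct nonpositive
points and ≥0 at two distinct nonpositive points must vanish identically. -/
lemma core {b k : ℝ}
    (h1 : ∃ u v : ℝ, 0 ≤ u ∧ 0 ≤ v ∧ u ≠ v ∧ b * u + k ≤ 0 ∧ b * v + k ≤ 0)
    (h2 : ∃ u v : ℝ, 0 ≤ u ∧ 0 ≤ v ∧ u ≠ v ∧ 0 ≤ b * u + k ∧ 0 ≤ b * v + k)
    (h3 : ∃ u v : ℝ, u ≤ 0 ∧ v ≤ 0 ∧ u ≠ v ∧ b * u + k ≤ 0 ∧ b * v + k ≤ 0)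
    (h4 : ∃ u v : ℝ, u ≤ 0 ∧ v ≤ 0 ∧ u ≠ v ∧ 0 ≤ b * u + k ∧ 0 ≤ b * v + k) :
    b = 0 ∧ k = 0 := by
  obtain ⟨u1, v1, hu1, hv1, huv1, hbu1, hbv1⟩ := h1
  obtain ⟨u2, v2, hu2, hv2, huv2, hbu2, hbv2⟩ := h2
  obtain ⟨u3, v3, hu3, hv3, huv3, hbu3, hbv3⟩ := h3
  obtain ⟨u4, v4, hu4, hv4, huv4, hbu4, hbv4⟩ := h4
  -- a strictly positive point where b*·+k ≤ 0
  have e1 : ∃ w, 0 < w ∧ b * w + k ≤ 0 := by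
    rcases huv1.lt_or_gt with h | h
    · exact ⟨v1, lt_of_le_of_lt hu1 h, hbv1⟩
    · exact ⟨u1, lt_of_le_of_lt hv1 h, hbu1⟩
  have e2 : ∃ w, 0 < w ∧ 0 ≤ b * w + k := by
    rcases huv2.lt_or_gt with h | h
    · exact ⟨v2, lt_of_le_of_lt hu2 h, hbv2⟩
    · exact ⟨u2, lt_of_le_of_lt hv2 h, hbu2⟩
  have e3 : ∃ w, w < 0 ∧ b * w + k ≤ 0 := by
    rcases huv3.lt_or_gt with h | h
    · exact ⟨u3, lt_of_lt_of_le h hv3, hbu3⟩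
    · exact ⟨v3, lt_of_lt_of_le h hu3, hbv3⟩
  have e4 : ∃ w, w < 0 ∧ 0 ≤ b * w + k := by
    rcases huv4.lt_or_gt with h | h
    · exact ⟨u4, lt_of_lt_of_le h hv4, hbu4⟩
    · exact ⟨v4, lt_of_lt_of_le h hu4, hbv4⟩
  obtain ⟨w1, hw1, hbw1⟩ := e1
  obtain ⟨w2, hw2, hbw2⟩ := e2
  obtain ⟨w3, hw3, hbw3⟩ := e3
  obtain ⟨w4, hw4, hbw4⟩ := e4
  have hb : b = 0 := by
    rcases lt_trichotomy b 0 with h | h | h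
    · nlinarith [mul_pos (neg_pos.mpr h) (sub_pos.mpr (lt_trans hw3 hw2))]
    · exact h
    · nlinarith [mul_pos h (sub_pos.mpr (lt_trans hw4 hw1))]
  subst hb
  simp only [zero_mul, zero_add] at hbw1 hbw2
  exact ⟨rfl, le_antisymm hbw1 hbw2⟩


lemma neg_of_scaled {x y d : ℝ} (hd : d ≠ 0) (h : x * d ^ 2 = y) (hy : y < 0) : x < 0 := by
  nlinarith [sq_pos' hd]

lemma pos_of_scaled {x y d : ℝ} (hd : d ≠ 0) (h : x * d ^ 2 = y) (hy : 0 < y) : 0 < x := by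
  nlinarith [sq_pos' hd]

lemma neg_of_prod {x y : ℝ} (h : 0 < x * y) (hx : x < 0) : y < 0 := by nlinarith
lemma pos_of_prod {x y : ℝ} (h : 0 < x * y) (hx : 0 < x) : 0 < y := by nlinarith

lemma h_le {s0 a b c : ℝ} (h : 0 ≤ a * b * c) : s0 ^ 2 * (a * -(b * c)) ≤ 0 := by
  nlinarith [mul_nonneg (sq_nonneg s0) h]

lemma h_ge {s0 a b c : ℝ} (h : a * b * c ≤ 0) : 0 ≤ s0 ^ 2 * (a * -(b * c)) := by
  nlinarith [mul_nonneg (sq_nonneg s0) (neg_nonneg.mpr h)]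

lemma h_le2 {s0 x : ℝ} (h : x ≤ 0) : s0 ^ 2 * x ≤ 0 :=
  mul_nonpos_of_nonneg_of_nonpos (sq_nonneg s0) h

lemma h_ge2 {s0 x : ℝ} (h : 0 ≤ x) : 0 ≤ s0 ^ 2 * x :=
  mul_nonneg (sq_nonneg s0) h

lemma Xcore {si sj ρ κ a b : ℝ} (hPs : (si * ρ) * sj < 0)
    (hap : 0 < sj * a) (ha3 : 0 ≤ si * (ρ * a + κ))
    (hbn : sj * b < 0) (hb3 : si * (ρ * b + κ) ≤ 0) : False := by
  nlinarith [mul_neg_of_neg_of_pos hPs hap, mul_pos_of_neg_of_neg hPs hbn,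
    mul_nonneg ha3 (sq_nonneg sj), mul_nonpos_of_nonpos_of_nonneg hb3 (sq_nonneg sj)]


/-- The main combinatorial contradiction: if every line of an arrangement of ≥ 5 lines
contributes boundary points (in the sense below) to two cells that are separated by
one of the lines, we get a contradiction. -/
theorem contradiction_lemma
    (L : Finset (Set Plane)) (hcard : 5 ≤ L.card)
    (Af Bf Cf : Set Plane → ℝ) (pa pb : Set Plane → Plane)
    (F : Set Plane → Plane → ℝ)
    (hFdef : ∀ l, F l = aff (Af l) (Bf l) (Cf l))
    (x₁ x₂ : Plane)
    (hab : ∀ l ∈ L, pa l ≠ pb l)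
    (hspan : ∀ l ∈ L, l = (affineSpan ℝ ({pa l, pb l} : Set Plane) : Set Plane))
    (hABn : ∀ l ∈ L, Af l ≠ 0 ∨ Bf l ≠ 0)
    (hzero : ∀ l ∈ L, l = {p | F l p = 0})
    (hs : ∀ l ∈ L, F l x₁ ≠ 0)
    (hr : ∀ l ∈ L, F l x₂ ≠ 0)
    (hp1 : ∀ l ∈ L, ∃ u v : Plane, u ≠ v ∧ u ∈ l ∧ v ∈ l ∧
        ∀ l' ∈ L, 0 ≤ F l' x₁ * F l' u ∧ 0 ≤ F l' x₁ * F l' v)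
    (hp2 : ∀ l ∈ L, ∃ u v : Plane, u ≠ v ∧ u ∈ l ∧ v ∈ l ∧
        ∀ l' ∈ L, 0 ≤ F l' x₂ * F l' u ∧ 0 ≤ F l' x₂ * F l' v)
    (l₀ : Set Plane) (hl₀ : l₀ ∈ L)
    (hneg : F l₀ x₁ * F l₀ x₂ < 0) : False := by
  classical
  -- basic membership facts
  have hmem : ∀ l ∈ L, ∀ p : Plane, p ∈ l ↔ F l p = 0 := by
    intro l hl p
    have h : p ∈ {q : Plane | F l q = 0} ↔ F l p = 0 := Iff.rfl
    rw [← hzero l hl] at h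
    exact h
  have hpa_mem : ∀ l ∈ L, pa l ∈ l := by
    intro l hl
    have h : pa l ∈ (affineSpan ℝ ({pa l, pb l} : Set Plane) : Set Plane) :=
      left_mem_affineSpan_pair ℝ _ _
    rw [← hspan l hl] at h
    exact h
  have hpb_mem : ∀ l ∈ L, pb l ∈ l := by
    intro l hl
    have h : pb l ∈ (affineSpan ℝ ({pa l, pb l} : Set Plane) : Set Plane) :=
      right_mem_affineSpan_pair ℝ _ _
    rw [← hspan l hl] at h
    exact h
  have hFpa0 : ∀ l ∈ L, F l (pa l) = 0 := fun l hl => (hmem l hl _).mp (hpa_mem l hl)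
  have hFpb0 : ∀ l ∈ L, F l (pb l) = 0 := fun l hl => (hmem l hl _).mp (hpb_mem l hl)
  -- injectivity of one functional on another's line, given nonzero det
  have hinj : ∀ l ∈ L, ∀ l' : Set Plane, (Af l * Bf l' - Af l' * Bf l) ≠ 0 →
      ∀ x y : Plane, x ∈ l → y ∈ l → x ≠ y → F l' x ≠ F l' y := by
    intro l hl l' hdet x y hx hy hxy
    rw [hFdef l']
    have hx' : x ∈ (affineSpan ℝ ({pa l, pb l} : Set Plane) : Set Plane) := by
      rw [← hspan l hl]; exact hx
    have hy' : y ∈ (affineSpan ℝ ({pa l, pb l} : Set Plane) : Set Plane) := by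
      rw [← hspan l hl]; exact hy
    have ha0 : aff (Af l) (Bf l) (Cf l) (pa l) = 0 := by rw [← hFdef l]; exact hFpa0 l hl
    have hb0 : aff (Af l) (Bf l) (Cf l) (pb l) = 0 := by rw [← hFdef l]; exact hFpb0 l hl
    exact eval_inj (hab l hl) ha0 hb0 hdet hx' hy' hxy
  have hconst : ∀ l ∈ L, ∀ l' : Set Plane, (Af l * Bf l' - Af l' * Bf l) = 0 →
      ∀ x y : Plane, x ∈ l → y ∈ l → F l' x = F l' y := by
    intro l hl l' hdet x y hx hy
    rw [hFdef l']
    have hx' : x ∈ (affineSpan ℝ ({pa l, pb l} : Set Plane) : Set Plane) := by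
      rw [← hspan l hl]; exact hx
    have hy' : y ∈ (affineSpan ℝ ({pa l, pb l} : Set Plane) : Set Plane) := by
      rw [← hspan l hl]; exact hy
    have ha0 : aff (Af l) (Bf l) (Cf l) (pa l) = 0 := by rw [← hFdef l]; exact hFpa0 l hl
    have hb0 : aff (Af l) (Bf l) (Cf l) (pb l) = 0 := by rw [← hFdef l]; exact hFpb0 l hl
    exact eval_const ha0 hb0 (hABn l hl) hdet hx' hy'
  -- non-parallelism with l₀
  have hDne : ∀ l ∈ L, l ≠ l₀ → Af l * Bf l₀ - Af l₀ * Bf l ≠ 0 := by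
    intro l hl hne hd0
    obtain ⟨u, v, huv, hul, hvl, hc1⟩ := hp1 l hl
    obtain ⟨u', v', h2uv, hul', hvl', hc2⟩ := hp2 l hl
    have ha1 : 0 ≤ F l₀ x₁ * F l₀ u := (hc1 l₀ hl₀).1
    have ha2 : 0 ≤ F l₀ x₂ * F l₀ u' := (hc2 l₀ hl₀).1
    have heqv : F l₀ u' = F l₀ u := hconst l hl l₀ hd0 u' u hul' hul
    rw [heqv] at ha2
    have hsq : F l₀ u ^ 2 ≤ 0 := by nlinarith [mul_nonneg ha1 ha2]
    have hz : F l₀ u = 0 := by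
      have h := le_antisymm hsq (sq_nonneg _)
      exact sq_eq_zero_iff.mp h
    -- l ⊆ l₀
    have hsub : l ⊆ l₀ := by
      intro p hp
      refine (hmem l₀ hl₀ p).mpr ?_
      rw [hconst l hl l₀ hd0 p u hp hul]
      exact hz
    -- l₀ ⊆ l
    have hsub' : l₀ ⊆ l := by
      intro p hp
      have hpa' : pa l ∈ (affineSpan ℝ ({pa l₀, pb l₀} : Set Plane) : Set Plane) := by
        rw [← hspan l₀ hl₀]; exact hsub (hpa_mem l hl)
      have hpb' : pb l ∈ (affineSpan ℝ ({pa l₀, pb l₀} : Set Plane) : Set Plane) := by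
        rw [← hspan l₀ hl₀]; exact hsub (hpb_mem l hl)
      have hp' : p ∈ (affineSpan ℝ ({pa l₀, pb l₀} : Set Plane) : Set Plane) := by
        rw [← hspan l₀ hl₀]; exact hp
      obtain ⟨r, hrp⟩ := mem_span_combo (hab l₀ hl₀) hpa' hpb' (hab l hl) hp'
      rw [hspan l hl]
      exact mem_line_iff.mpr ⟨r, hrp⟩
    exact hne (le_antisymm hsub hsub')
  -- the affine relation between three functionals
  have hrel : ∀ i ∈ L, ∀ j ∈ L, i ≠ l₀ → j ≠ l₀ → ∀ p : Plane,
      F i p = ((Af i * Bf l₀ - Af l₀ * Bf i) / (Af j * Bf l₀ - Af l₀ * Bf j)) * F j p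
        + ((Af j * Bf i - Af i * Bf j) / (Af j * Bf l₀ - Af l₀ * Bf j)) * F l₀ p
        + (Cf i - ((Af i * Bf l₀ - Af l₀ * Bf i) / (Af j * Bf l₀ - Af l₀ * Bf j)) * Cf j
           - ((Af j * Bf i - Af i * Bf j) / (Af j * Bf l₀ - Af l₀ * Bf j)) * Cf l₀) := by
    intro i hi j hj hine hjne p
    have hDj := hDne j hj hjne
    rw [hFdef i, hFdef j, hFdef l₀]
    simp only [aff]
    have hDD : (Af j * Bf l₀ - Af l₀ * Bf j)⁻¹ * (Af j * Bf l₀ - Af l₀ * Bf j) = 1 :=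
      inv_mul_cancel₀ hDj
    linear_combination (-(Af i * p 0 + Bf i * p 1)) * hDD
  -- sign helper facts
  have sign_pp : ∀ a b c : ℝ, 0 < a * b → 0 < a * c → 0 < b * c := by
    intro a b c h1 h2
    have ha : a ≠ 0 := by rintro rfl; simp at h1
    nlinarith [mul_pos h1 h2, sq_pos' ha]
  have sign_pn : ∀ a b c : ℝ, 0 < a * b → a * c < 0 → b * c < 0 := by
    intro a b c h1 h2
    have ha : a ≠ 0 := by rintro rfl; simp at h1
    nlinarith [mul_pos h1 (neg_pos.mpr h2), sq_pos' ha]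
  -- Lemma X : two lines whose (F·x₁-normalized) determinants w.r.t. l₀ have opposite
  -- signs while both cells see them with a sign flip
  have hX : ∀ i ∈ L, ∀ j ∈ L, i ≠ l₀ → j ≠ l₀ → i ≠ j →
      (F i x₁ * (Af i * Bf l₀ - Af l₀ * Bf i)) * (F j x₁ * (Af j * Bf l₀ - Af l₀ * Bf j)) < 0 →
      F i x₁ * F i x₂ < 0 → F j x₁ * F j x₂ < 0 → False := by
    intro i hi j hj hine hjne hij hPD hsi hsj
    obtain ⟨u, v, huv, hul, hvl, hc1⟩ := hp1 l₀ hl₀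
    obtain ⟨u', v', huv', hul', hvl', hc2⟩ := hp2 l₀ hl₀
    have hdetj : Af l₀ * Bf j - Af j * Bf l₀ ≠ 0 := by
      have h := hDne j hj hjne; intro h2; apply h; linarith
    have hjuv : F j u ≠ F j v := hinj l₀ hl₀ j hdetj u v hul hvl huv
    have hjuv' : F j u' ≠ F j v' := hinj l₀ hl₀ j hdetj u' v' hul' hvl' huv'
    have h0u : F l₀ u = 0 := (hmem l₀ hl₀ u).mp hul
    have h0v : F l₀ v = 0 := (hmem l₀ hl₀ v).mp hvl
    have h0u' : F l₀ u' = 0 := (hmem l₀ hl₀ u').mp hul'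
    have h0v' : F l₀ v' = 0 := (hmem l₀ hl₀ v').mp hvl'
    have hreli := hrel i hi j hj hine hjne
    set ρ := (Af i * Bf l₀ - Af l₀ * Bf i) / (Af j * Bf l₀ - Af l₀ * Bf j) with hρ
    set β := (Af j * Bf i - Af i * Bf j) / (Af j * Bf l₀ - Af l₀ * Bf j) with hβ
    set κ := Cf i - ρ * Cf j - β * Cf l₀ with hκ
    have e_u : F i u = ρ * F j u + κ := by have h := hreli u; rw [h0u] at h; linarith
    have e_v : F i v = ρ * F j v + κ := by have h := hreli v; rw [h0v] at h; linarith
    have e_u' : F i u' = ρ * F j u' + κ := by have h := hreli u'; rw [h0u'] at h; linarith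
    have e_v' : F i v' = ρ * F j v' + κ := by have h := hreli v'; rw [h0v'] at h; linarith
    have g1 : 0 ≤ F j x₁ * F j u := (hc1 j hj).1
    have g2 : 0 ≤ F j x₁ * F j v := (hc1 j hj).2
    have g3 : 0 ≤ F i x₁ * (ρ * F j u + κ) := by rw [← e_u]; exact (hc1 i hi).1
    have g4 : 0 ≤ F i x₁ * (ρ * F j v + κ) := by rw [← e_v]; exact (hc1 i hi).2
    have hsj' : F j x₂ * F j x₁ < 0 := by rw [mul_comm]; exact hsj
    have hsi' : F i x₂ * F i x₁ < 0 := by rw [mul_comm]; exact hsi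
    have g5 : F j x₁ * F j u' ≤ 0 := transfer_nonpos (hc2 j hj).1 hsj'
    have g6 : F j x₁ * F j v' ≤ 0 := transfer_nonpos (hc2 j hj).2 hsj'
    have g7 : F i x₁ * (ρ * F j u' + κ) ≤ 0 := by
      rw [← e_u']; exact transfer_nonpos (hc2 i hi).1 hsi'
    have g8 : F i x₁ * (ρ * F j v' + κ) ≤ 0 := by
      rw [← e_v']; exact transfer_nonpos (hc2 i hi).2 hsi'
    have hane : F j x₁ * F j u ≠ F j x₁ * F j v :=
      fun h => hjuv (mul_left_cancel₀ (hs j hj) h)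
    have hbne : F j x₁ * F j u' ≠ F j x₁ * F j v' :=
      fun h => hjuv' (mul_left_cancel₀ (hs j hj) h)
    have e1 : ∃ a : Plane, 0 < F j x₁ * F j a ∧ 0 ≤ F i x₁ * (ρ * F j a + κ) := by
      rcases hane.lt_or_gt with h | h
      · exact ⟨v, lt_of_le_of_lt g1 h, g4⟩
      · exact ⟨u, lt_of_le_of_lt g2 h, g3⟩
    have e2 : ∃ b : Plane, F j x₁ * F j b < 0 ∧ F i x₁ * (ρ * F j b + κ) ≤ 0 := by
      rcases hbne.lt_or_gt with h | h
      · exact ⟨u', lt_of_lt_of_le h g6, g7⟩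
      · exact ⟨v', lt_of_lt_of_le h g5, g8⟩
    obtain ⟨a, hap, ha3⟩ := e1
    obtain ⟨b, hbn, hb3⟩ := e2
    have hPs : (F i x₁ * ρ) * F j x₁ < 0 := by
      have hρDj : ρ * (Af j * Bf l₀ - Af l₀ * Bf j) = Af i * Bf l₀ - Af l₀ * Bf i :=
        div_mul_cancel₀ _ (hDne j hj hjne)
      have hid : ((F i x₁ * ρ) * F j x₁) * (Af j * Bf l₀ - Af l₀ * Bf j) ^ 2
          = (F i x₁ * (Af i * Bf l₀ - Af l₀ * Bf i))
            * (F j x₁ * (Af j * Bf l₀ - Af l₀ * Bf j)) := by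
        linear_combination (F i x₁ * F j x₁ * (Af j * Bf l₀ - Af l₀ * Bf j)) * hρDj
      exact neg_of_scaled (hDne j hj hjne) hid hPD
    exact Xcore hPs hap ha3 hbn hb3
  -- Lemma P : two lines with same-sign normalized determinants w.r.t. l₀,
  -- seen with the same sign relation by both cells
  have hPair : ∀ i ∈ L, ∀ j ∈ L, i ≠ l₀ → j ≠ l₀ → i ≠ j →
      0 < (F i x₁ * (Af i * Bf l₀ - Af l₀ * Bf i)) * (F j x₁ * (Af j * Bf l₀ - Af l₀ * Bf j)) →
      0 < (F i x₁ * F i x₂) * (F j x₁ * F j x₂) → False := by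
    intro i hi j hj hine hjne hij hPD hσσ
    obtain ⟨u1, v1, h1uv, h1ul, h1vl, hc1⟩ := hp1 i hi
    obtain ⟨u2, v2, h2uv, h2ul, h2vl, hc2⟩ := hp1 j hj
    obtain ⟨u3, v3, h3uv, h3ul, h3vl, hc3⟩ := hp2 i hi
    obtain ⟨u4, v4, h4uv, h4ul, h4vl, hc4⟩ := hp2 j hj
    have hreli := hrel i hi j hj hine hjne
    set ρ := (Af i * Bf l₀ - Af l₀ * Bf i) / (Af j * Bf l₀ - Af l₀ * Bf j) with hρ
    set β := (Af j * Bf i - Af i * Bf j) / (Af j * Bf l₀ - Af l₀ * Bf j) with hβ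
    set κ := Cf i - ρ * Cf j - β * Cf l₀ with hκ
    have z1u : F i u1 = 0 := (hmem i hi u1).mp h1ul
    have z1v : F i v1 = 0 := (hmem i hi v1).mp h1vl
    have z2u : F j u2 = 0 := (hmem j hj u2).mp h2ul
    have z2v : F j v2 = 0 := (hmem j hj v2).mp h2vl
    have z3u : F i u3 = 0 := (hmem i hi u3).mp h3ul
    have z3v : F i v3 = 0 := (hmem i hi v3).mp h3vl
    have z4u : F j u4 = 0 := (hmem j hj u4).mp h4ul
    have z4v : F j v4 = 0 := (hmem j hj v4).mp h4vl
    have r1u : β * F l₀ u1 + κ = -(ρ * F j u1) := by have h := hreli u1; rw [z1u] at h; linarith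
    have r1v : β * F l₀ v1 + κ = -(ρ * F j v1) := by have h := hreli v1; rw [z1v] at h; linarith
    have r2u : β * F l₀ u2 + κ = F i u2 := by have h := hreli u2; rw [z2u] at h; linarith
    have r2v : β * F l₀ v2 + κ = F i v2 := by have h := hreli v2; rw [z2v] at h; linarith
    have r3u : β * F l₀ u3 + κ = -(ρ * F j u3) := by have h := hreli u3; rw [z3u] at h; linarith
    have r3v : β * F l₀ v3 + κ = -(ρ * F j v3) := by have h := hreli v3; rw [z3v] at h; linarith
    have r4u : β * F l₀ u4 + κ = F i u4 := by have h := hreli u4; rw [z4u] at h; linarith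
    have r4v : β * F l₀ v4 + κ = F i v4 := by have h := hreli v4; rw [z4v] at h; linarith
    have hρDj : ρ * (Af j * Bf l₀ - Af l₀ * Bf j) = Af i * Bf l₀ - Af l₀ * Bf i :=
      div_mul_cancel₀ _ (hDne j hj hjne)
    have hid : ((F i x₁ * ρ) * F j x₁) * (Af j * Bf l₀ - Af l₀ * Bf j) ^ 2
        = (F i x₁ * (Af i * Bf l₀ - Af l₀ * Bf i))
          * (F j x₁ * (Af j * Bf l₀ - Af l₀ * Bf j)) := by
      linear_combination (F i x₁ * F j x₁ * (Af j * Bf l₀ - Af l₀ * Bf j)) * hρDj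
    have hPs : 0 < (F i x₁ * ρ) * F j x₁ := pos_of_scaled (hDne j hj hjne) hid hPD
    have hPs' : 0 < F j x₁ * (F i x₁ * ρ) := by rw [mul_comm]; exact hPs
    have hdet0i : Af i * Bf l₀ - Af l₀ * Bf i ≠ 0 := hDne i hi hine
    have hdet0j : Af j * Bf l₀ - Af l₀ * Bf j ≠ 0 := hDne j hj hjne
    have hs0 := hs l₀ hl₀
    have D1 : F l₀ x₁ * F l₀ u1 ≠ F l₀ x₁ * F l₀ v1 :=
      fun h => hinj i hi l₀ hdet0i u1 v1 h1ul h1vl h1uv (mul_left_cancel₀ hs0 h)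
    have D2 : F l₀ x₁ * F l₀ u2 ≠ F l₀ x₁ * F l₀ v2 :=
      fun h => hinj j hj l₀ hdet0j u2 v2 h2ul h2vl h2uv (mul_left_cancel₀ hs0 h)
    have D3 : F l₀ x₁ * F l₀ u3 ≠ F l₀ x₁ * F l₀ v3 :=
      fun h => hinj i hi l₀ hdet0i u3 v3 h3ul h3vl h3uv (mul_left_cancel₀ hs0 h)
    have D4 : F l₀ x₁ * F l₀ u4 ≠ F l₀ x₁ * F l₀ v4 :=
      fun h => hinj j hj l₀ hdet0j u4 v4 h4ul h4vl h4uv (mul_left_cancel₀ hs0 h)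
    set bC := F i x₁ * β * F l₀ x₁ with hbC
    set kC := F i x₁ * κ * (F l₀ x₁) ^ 2 with hkC
    have val1 : ∀ p : Plane, bC * (F l₀ x₁ * F l₀ p) + kC
        = (F l₀ x₁) ^ 2 * (F i x₁ * (β * F l₀ p + κ)) := by intro p; rw [hbC, hkC]; ring
    -- heights
    have y1u : 0 ≤ F l₀ x₁ * F l₀ u1 := (hc1 l₀ hl₀).1
    have y1v : 0 ≤ F l₀ x₁ * F l₀ v1 := (hc1 l₀ hl₀).2
    have y2u : 0 ≤ F l₀ x₁ * F l₀ u2 := (hc2 l₀ hl₀).1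
    have y2v : 0 ≤ F l₀ x₁ * F l₀ v2 := (hc2 l₀ hl₀).2
    have hneg' : F l₀ x₂ * F l₀ x₁ < 0 := by rw [mul_comm]; exact hneg
    have y3u : F l₀ x₁ * F l₀ u3 ≤ 0 := transfer_nonpos (hc3 l₀ hl₀).1 hneg'
    have y3v : F l₀ x₁ * F l₀ v3 ≤ 0 := transfer_nonpos (hc3 l₀ hl₀).2 hneg'
    have y4u : F l₀ x₁ * F l₀ u4 ≤ 0 := transfer_nonpos (hc4 l₀ hl₀).1 hneg'
    have y4v : F l₀ x₁ * F l₀ v4 ≤ 0 := transfer_nonpos (hc4 l₀ hl₀).2 hneg'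
    -- conditions from cell 1
    have t1u : 0 ≤ (F i x₁ * ρ) * F j u1 := transfer_nonneg (hc1 j hj).1 hPs'
    have t1v : 0 ≤ (F i x₁ * ρ) * F j v1 := transfer_nonneg (hc1 j hj).2 hPs'
    have c1u : bC * (F l₀ x₁ * F l₀ u1) + kC ≤ 0 := by
      rw [val1 u1, r1u]; exact h_le t1u
    have c1v : bC * (F l₀ x₁ * F l₀ v1) + kC ≤ 0 := by
      rw [val1 v1, r1v]; exact h_le t1v
    have c2u : 0 ≤ bC * (F l₀ x₁ * F l₀ u2) + kC := by
      rw [val1 u2, r2u]; exact h_ge2 (hc2 i hi).1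
    have c2v : 0 ≤ bC * (F l₀ x₁ * F l₀ v2) + kC := by
      rw [val1 v2, r2v]; exact h_ge2 (hc2 i hi).2
    -- conditions from cell 2, split on the sign relation of cell 2 vs cell 1 at line i
    have hσine : F i x₁ * F i x₂ ≠ 0 := mul_ne_zero (hs i hi) (hr i hi)
    have hcore : bC = 0 ∧ kC = 0 := by
      rcases hσine.lt_or_gt with hσi | hσi
      · -- σ_i < 0, hence σ_j < 0
        have hσj : F j x₁ * F j x₂ < 0 := neg_of_prod hσσ hσi
        have hσi' : F i x₂ * F i x₁ < 0 := by rw [mul_comm]; exact hσi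
        have hrj : F j x₂ * (F i x₁ * ρ) < 0 := by
          have h := sign_pn (F j x₁) (F i x₁ * ρ) (F j x₂) hPs' hσj
          rw [mul_comm]; exact h
        have t3u : (F i x₁ * ρ) * F j u3 ≤ 0 := transfer_nonpos (hc3 j hj).1 hrj
        have t3v : (F i x₁ * ρ) * F j v3 ≤ 0 := transfer_nonpos (hc3 j hj).2 hrj
        have c3u : 0 ≤ bC * (F l₀ x₁ * F l₀ u3) + kC := by
          rw [val1 u3, r3u]; exact h_ge t3u
        have c3v : 0 ≤ bC * (F l₀ x₁ * F l₀ v3) + kC := by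
          rw [val1 v3, r3v]; exact h_ge t3v
        have t4u : F i x₁ * F i u4 ≤ 0 := transfer_nonpos (hc4 i hi).1 hσi'
        have t4v : F i x₁ * F i v4 ≤ 0 := transfer_nonpos (hc4 i hi).2 hσi'
        have c4u : bC * (F l₀ x₁ * F l₀ u4) + kC ≤ 0 := by
          rw [val1 u4, r4u]; exact h_le2 t4u
        have c4v : bC * (F l₀ x₁ * F l₀ v4) + kC ≤ 0 := by
          rw [val1 v4, r4v]; exact h_le2 t4v
        exact core ⟨_, _, y1u, y1v, D1, c1u, c1v⟩ ⟨_, _, y2u, y2v, D2, c2u, c2v⟩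
          ⟨_, _, y4u, y4v, D4, c4u, c4v⟩ ⟨_, _, y3u, y3v, D3, c3u, c3v⟩
      · -- σ_i > 0, hence σ_j > 0
        have hσj : 0 < F j x₁ * F j x₂ := pos_of_prod hσσ hσi
        have hσi' : 0 < F i x₂ * F i x₁ := by rw [mul_comm]; exact hσi
        have hrj : 0 < F j x₂ * (F i x₁ * ρ) := by
          have h := sign_pp (F j x₁) (F i x₁ * ρ) (F j x₂) hPs' hσj
          rw [mul_comm]; exact h
        have t3u : 0 ≤ (F i x₁ * ρ) * F j u3 := transfer_nonneg (hc3 j hj).1 hrj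
        have t3v : 0 ≤ (F i x₁ * ρ) * F j v3 := transfer_nonneg (hc3 j hj).2 hrj
        have c3u : bC * (F l₀ x₁ * F l₀ u3) + kC ≤ 0 := by
          rw [val1 u3, r3u]; exact h_le t3u
        have c3v : bC * (F l₀ x₁ * F l₀ v3) + kC ≤ 0 := by
          rw [val1 v3, r3v]; exact h_le t3v
        have t4u : 0 ≤ F i x₁ * F i u4 := transfer_nonneg (hc4 i hi).1 hσi'
        have t4v : 0 ≤ F i x₁ * F i v4 := transfer_nonneg (hc4 i hi).2 hσi'
        have c4u : 0 ≤ bC * (F l₀ x₁ * F l₀ u4) + kC := by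
          rw [val1 u4, r4u]; exact h_ge2 t4u
        have c4v : 0 ≤ bC * (F l₀ x₁ * F l₀ v4) + kC := by
          rw [val1 v4, r4v]; exact h_ge2 t4v
        exact core ⟨_, _, y1u, y1v, D1, c1u, c1v⟩ ⟨_, _, y2u, y2v, D2, c2u, c2v⟩
          ⟨_, _, y3u, y3v, D3, c3u, c3v⟩ ⟨_, _, y4u, y4v, D4, c4u, c4v⟩
    -- now β = 0 and κ = 0, so lines i and j coincide, contradiction
    have hβ0 : β = 0 := by
      have h := hcore.1
      rw [hbC] at h
      rcases mul_eq_zero.mp h with h' | h'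
      · rcases mul_eq_zero.mp h' with h'' | h''
        · exact absurd h'' (hs i hi)
        · exact h''
      · exact absurd h' hs0
    have hκ0 : κ = 0 := by
      have h := hcore.2
      rw [hkC] at h
      rcases mul_eq_zero.mp h with h' | h'
      · rcases mul_eq_zero.mp h' with h'' | h''
        · exact absurd h'' (hs i hi)
        · exact h''
      · exact absurd (sq_eq_zero_iff.mp h') hs0
    have hρne : ρ ≠ 0 := div_ne_zero hdet0i hdet0j
    apply hij
    rw [hzero i hi, hzero j hj]
    ext p
    simp only [Set.mem_setOf_eq]
    have hp := hreli p
    rw [hβ0, hκ0] at hp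
    simp only [zero_mul, add_zero] at hp
    constructor
    · intro h
      rw [h] at hp
      rcases mul_eq_zero.mp hp.symm with h' | h'
      · exact absurd h' hρne
      · exact h'
    · intro h
      rw [hp, h, mul_zero]
  -- Counting: at least four lines other than l₀
  have hneg_pair : ∀ i ∈ L, ∀ j ∈ L, i ≠ l₀ → j ≠ l₀ → i ≠ j →
      F i x₁ * F i x₂ < 0 → F j x₁ * F j x₂ < 0 → False := by
    intro i hi j hj hine hjne hij hσi hσj
    have hPDne : (F i x₁ * (Af i * Bf l₀ - Af l₀ * Bf i))
        * (F j x₁ * (Af j * Bf l₀ - Af l₀ * Bf j)) ≠ 0 :=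
      mul_ne_zero (mul_ne_zero (hs i hi) (hDne i hi hine))
        (mul_ne_zero (hs j hj) (hDne j hj hjne))
    rcases hPDne.lt_or_gt with h | h
    · exact hX i hi j hj hine hjne hij h hσi hσj
    · exact hPair i hi j hj hine hjne hij h (mul_pos_of_neg_of_neg hσi hσj)
  set T := L.erase l₀ with hT
  have hT4 : 4 ≤ T.card := by
    rw [hT, Finset.card_erase_of_mem hl₀]
    omega
  set Tn := T.filter (fun l => F l x₁ * F l x₂ < 0) with hTn
  have hTn1 : Tn.card ≤ 1 := by
    by_contra h
    push_neg at h
    obtain ⟨i, hi, j, hj, hij⟩ := Finset.one_lt_card.mp h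
    rw [hTn, Finset.mem_filter] at hi hj
    exact hneg_pair i (Finset.mem_of_mem_erase hi.1) j (Finset.mem_of_mem_erase hj.1)
      (Finset.ne_of_mem_erase hi.1) (Finset.ne_of_mem_erase hj.1) hij hi.2 hj.2
  set Tp := T.filter (fun l => ¬ (F l x₁ * F l x₂ < 0)) with hTp
  have hTp3 : 3 ≤ Tp.card := by
    have h := Finset.card_filter_add_card_filter_not
      (s := T) (p := fun l => F l x₁ * F l x₂ < 0)
    rw [← hTn, ← hTp] at h
    omega
  have hmap : ∀ l ∈ Tp, (decide (0 < F l x₁ * (Af l * Bf l₀ - Af l₀ * Bf l)))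
      ∈ (Finset.univ : Finset Bool) := fun _ _ => Finset.mem_univ _
  obtain ⟨i, hi, j, hj, hij, heqb⟩ :=
    Finset.exists_ne_map_eq_of_card_lt_of_maps_to (by simp; omega) hmap
  rw [hTp, Finset.mem_filter] at hi hj
  have hiL : i ∈ L := Finset.mem_of_mem_erase hi.1
  have hjL : j ∈ L := Finset.mem_of_mem_erase hj.1
  have hine : i ≠ l₀ := Finset.ne_of_mem_erase hi.1
  have hjne : j ≠ l₀ := Finset.ne_of_mem_erase hj.1
  have hσi : 0 < F i x₁ * F i x₂ :=
    lt_of_le_of_ne (not_lt.mp hi.2) (Ne.symm (mul_ne_zero (hs i hiL) (hr i hiL)))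
  have hσj : 0 < F j x₁ * F j x₂ :=
    lt_of_le_of_ne (not_lt.mp hj.2) (Ne.symm (mul_ne_zero (hs j hjL) (hr j hjL)))
  have hiff := decide_eq_decide.mp heqb
  have hPD : 0 < (F i x₁ * (Af i * Bf l₀ - Af l₀ * Bf i))
      * (F j x₁ * (Af j * Bf l₀ - Af l₀ * Bf j)) := by
    by_cases h : 0 < F i x₁ * (Af i * Bf l₀ - Af l₀ * Bf i)
    · exact mul_pos h (hiff.mp h)
    · have hi' : F i x₁ * (Af i * Bf l₀ - Af l₀ * Bf i) < 0 :=
        lt_of_le_of_ne (not_lt.mp h) (mul_ne_zero (hs i hiL) (hDne i hiL hine))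
      have hj' : F j x₁ * (Af j * Bf l₀ - Af l₀ * Bf j) < 0 := by
        by_contra h2
        push_neg at h2
        exact h (hiff.mpr (lt_of_le_of_ne h2
          (Ne.symm (mul_ne_zero (hs j hjL) (hDne j hjL hjne)))))
      exact mul_pos_of_neg_of_neg hi' hj'
  exact hPair i hiL j hjL hine hjne hij hPD (mul_pos hσi hσj)




end AMOF

/-- In an arrangement of `m ≥ 5` lines, at most one face has `m` edges. -/
theorem at_most_one_face_with_m_edges (L : Finset (Set Plane))
    (hlines : ∀ l ∈ L, IsLine l) (hm : 5 ≤ L.card)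
    (F₁ F₂ : Set Plane) (hF₁ : IsFace L F₁) (hF₂ : IsFace L F₂)
    (he₁ : ∀ l ∈ L, ContributesEdge l F₁) (he₂ : ∀ l ∈ L, ContributesEdge l F₂) :
    F₁ = F₂ := by
  classical
  obtain ⟨x₁, hx₁, hF₁e⟩ := hF₁
  obtain ⟨x₂, hx₂, hF₂e⟩ := hF₂
  have hLdata : ∀ l ∈ L, ∃ (A B C : ℝ) (a b : Plane), a ≠ b ∧
      l = (affineSpan ℝ ({a, b} : Set Plane) : Set Plane) ∧
      (A ≠ 0 ∨ B ≠ 0) ∧ l = {p | AMOF.aff A B C p = 0} :=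
    fun l hl => AMOF.line_repr (hlines l hl)
  choose! Af Bf Cf pa pb hab hspan hABn hzero using hLdata
  set F : Set Plane → Plane → ℝ := fun l => AMOF.aff (Af l) (Bf l) (Cf l) with hFd
  have hFdef' : ∀ l, F l = AMOF.aff (Af l) (Bf l) (Cf l) := fun l => rfl
  have hzero' : ∀ l ∈ L, l = {p | F l p = 0} := hzero
  have hmem : ∀ l ∈ L, ∀ p : Plane, p ∈ l ↔ F l p = 0 := by
    intro l hl p
    have h : p ∈ {q : Plane | F l q = 0} ↔ F l p = 0 := Iff.rfl
    rw [← hzero' l hl] at h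
    exact h
  have hcont : ∀ l, Continuous (F l) := fun l => AMOF.aff_cont _ _ _
  have hUmem : ∀ p : Plane, p ∈ (⋃ l ∈ L, l)ᶜ ↔ ∀ l ∈ L, F l p ≠ 0 := by
    intro p
    rw [Set.mem_compl_iff]
    simp only [Set.mem_iUnion, exists_prop, not_exists, not_and]
    constructor
    · exact fun h l hl h0 => h l hl ((hmem l hl p).mpr h0)
    · exact fun h l hl hp => h l hl ((hmem l hl p).mp hp)
  have hs : ∀ l ∈ L, F l x₁ ≠ 0 := fun l hl => (hUmem x₁).mp hx₁ l hl
  have hr : ∀ l ∈ L, F l x₂ ≠ 0 := fun l hl => (hUmem x₂).mp hx₂ l hl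
  have hside : ∀ (x : Plane), x ∈ (⋃ l ∈ L, l)ᶜ → ∀ l ∈ L,
      connectedComponentIn (⋃ l ∈ L, l)ᶜ x ⊆ {p : Plane | 0 < F l x * F l p} := by
    intro x hx l hl
    have hfx : F l x ≠ 0 := (hUmem x).mp hx l hl
    have hopen1 : IsOpen {p : Plane | 0 < F l x * F l p} :=
      isOpen_lt continuous_const (continuous_const.mul (hcont l))
    have hopen2 : IsOpen {p : Plane | F l x * F l p < 0} :=
      isOpen_lt (continuous_const.mul (hcont l)) continuous_const
    have hdisj : Disjoint {p : Plane | 0 < F l x * F l p} {p : Plane | F l x * F l p < 0} := by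
      rw [Set.disjoint_left]
      intro p h1 h2
      simp only [Set.mem_setOf_eq] at h1 h2
      linarith
    have hsub : connectedComponentIn (⋃ l ∈ L, l)ᶜ x ⊆
        {p : Plane | 0 < F l x * F l p} ∪ {p : Plane | F l x * F l p < 0} := by
      intro p hp
      have hpU := connectedComponentIn_subset _ _ hp
      have hfp : F l p ≠ 0 := (hUmem p).mp hpU l hl
      rcases (mul_ne_zero hfx hfp).lt_or_gt with h | h
      · exact Or.inr h
      · exact Or.inl h
    exact isPreconnected_connectedComponentIn.subset_left_of_subset_union hopen1 hopen2
      hdisj hsub ⟨x, mem_connectedComponentIn hx, mul_self_pos.mpr hfx⟩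
  have hfr1 : ∀ l ∈ L, frontier F₁ ⊆ {p : Plane | 0 ≤ F l x₁ * F l p} := by
    intro l hl
    have h1 : F₁ ⊆ {p : Plane | 0 < F l x₁ * F l p} := by
      rw [hF₁e]; exact hside x₁ hx₁ l hl
    have h2 : IsClosed {p : Plane | 0 ≤ F l x₁ * F l p} :=
      isClosed_le continuous_const (continuous_const.mul (hcont l))
    exact frontier_subset_closure.trans
      (closure_minimal (h1.trans (fun p hp => by
        have h : 0 < F l x₁ * F l p := hp
        exact h.le)) h2)
  have hfr2 : ∀ l ∈ L, frontier F₂ ⊆ {p : Plane | 0 ≤ F l x₂ * F l p} := by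
    intro l hl
    have h1 : F₂ ⊆ {p : Plane | 0 < F l x₂ * F l p} := by
      rw [hF₂e]; exact hside x₂ hx₂ l hl
    have h2 : IsClosed {p : Plane | 0 ≤ F l x₂ * F l p} :=
      isClosed_le continuous_const (continuous_const.mul (hcont l))
    exact frontier_subset_closure.trans
      (closure_minimal (h1.trans (fun p hp => by
        have h : 0 < F l x₂ * F l p := hp
        exact h.le)) h2)
  have hp1 : ∀ l ∈ L, ∃ u v : Plane, u ≠ v ∧ u ∈ l ∧ v ∈ l ∧
      ∀ l' ∈ L, 0 ≤ F l' x₁ * F l' u ∧ 0 ≤ F l' x₁ * F l' v := by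
    intro l hl
    obtain ⟨u, v, huv, hseg⟩ := he₁ l hl
    have hu := hseg (left_mem_segment ℝ u v)
    have hv := hseg (right_mem_segment ℝ u v)
    exact ⟨u, v, huv, hu.1, hv.1, fun l' hl' => ⟨hfr1 l' hl' hu.2, hfr1 l' hl' hv.2⟩⟩
  have hp2 : ∀ l ∈ L, ∃ u v : Plane, u ≠ v ∧ u ∈ l ∧ v ∈ l ∧
      ∀ l' ∈ L, 0 ≤ F l' x₂ * F l' u ∧ 0 ≤ F l' x₂ * F l' v := by
    intro l hl
    obtain ⟨u, v, huv, hseg⟩ := he₂ l hl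
    have hu := hseg (left_mem_segment ℝ u v)
    have hv := hseg (right_mem_segment ℝ u v)
    exact ⟨u, v, huv, hu.1, hv.1, fun l' hl' => ⟨hfr2 l' hl' hu.2, hfr2 l' hl' hv.2⟩⟩
  by_cases hss : ∀ l ∈ L, 0 < F l x₁ * F l x₂
  · -- both cells on the same side of every line : they are equal
    set S : Set Plane := {q : Plane | ∀ l ∈ L, 0 < F l x₁ * F l q} with hS
    have hconv : Convex ℝ S := by
      intro p hp q hq a b ha hb hab1
      intro l hl
      have h1 := hp l hl
      have h2 := hq l hl
      show 0 < F l x₁ * F l (a • p + b • q)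
      have hcombo : F l (a • p + b • q) = a * F l p + b * F l q :=
        AMOF.aff_combo2 (Af l) (Bf l) (Cf l) p q hab1
      rw [hcombo]
      rcases ha.eq_or_lt with h | h
      · have hb1 : b = 1 := by linarith
        rw [← h, hb1]
        simpa using h2
      · nlinarith [mul_pos h h1, mul_nonneg hb h2.le]
    have hSU : S ⊆ (⋃ l ∈ L, l)ᶜ := by
      intro p hp
      refine (hUmem p).mpr (fun l hl h0 => ?_)
      have h := hp l hl
      rw [h0, mul_zero] at h
      exact lt_irrefl 0 h
    have hx₁S : x₁ ∈ S := fun l hl => mul_self_pos.mpr (hs l hl)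
    have hx₂S : x₂ ∈ S := hss
    have hsub := hconv.isPreconnected.subset_connectedComponentIn hx₁S hSU
    rw [hF₁e, hF₂e]
    exact connectedComponentIn_eq (hsub hx₂S)
  · push_neg at hss
    obtain ⟨l₀, hl₀, hle⟩ := hss
    exfalso
    have hneg : F l₀ x₁ * F l₀ x₂ < 0 :=
      lt_of_le_of_ne hle (mul_ne_zero (hs l₀ hl₀) (hr l₀ hl₀))
    exact AMOF.contradiction_lemma L hm Af Bf Cf pa pb F hFdef' x₁ x₂ hab hspan hABn
      hzero' hs hr hp1 hp2 l₀ hl₀ hneg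
end
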